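/- Let d_f be μ̄-strongly convex and L̄-smooth with μ̄ > 0, and d_h convex. For ρ > 0, the Peaceman–Rachford operator T = refl_{ρ d_h} ∘ refl_{ρ d_f} is Lipschitz continuous with constant λ = max{ |1 − ρL̄|/(1 + ρL̄), |1 − ρμ̄|/(1 + ρμ̄) } < 1. -/

import Mathlib

def IsSmoothFn {p : ℕ} (L : ℝ) (f : EuclideanSpace ℝ (Fin p) → ℝ) : Prop :=
  ∃ f' : EuclideanSpace ℝ (Fin p) → EuclideanSpace ℝ (Fin p),
    (∀ x, HasGradientAt f (f' x) x) ∧ LipschitzWith L.toNNReal f'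

/-- `P` is the proximal map of `g` with parameter `ρ`: `P x` minimizes
`y ↦ g y + ‖y - x‖² / (2ρ)`. -/
def IsProxOf {p : ℕ} (ρ : ℝ) (g : EuclideanSpace ℝ (Fin p) → ℝ)
    (P : EuclideanSpace ℝ (Fin p) → EuclideanSpace ℝ (Fin p)) : Prop :=
  ∀ x, IsMinOn (fun y => g y + ‖y - x‖ ^ 2 / (2 * ρ)) Set.univ (P x)

/-!
Write `R_g = 2 prox_{ρg} - id`. For convex `d_h`, the prox objective is `ρ⁻¹`-strongly convex, so
comparing its values at `prox z` and `prox w` gives firm nonexpansiveness of `prox_{ρ d_h}`, hence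
`R_{d_h}` is nonexpansive. For `d_f`, the optimality condition reads `z = x + ρ ∇d_f x` for
`x = prox_{ρ d_f} z`; with `y = prox_{ρ d_f} w`, `u = x - y` and `d = ∇d_f x - ∇d_f y` this gives
`z - w = u + ρ d` and `R_{d_f} z - R_{d_f} w = u - ρ d`. The Baillon–Haddad argument applied to
`d_f - μ̄/2 ‖·‖²` yields `‖d‖² + μ̄L̄‖u‖² ≤ (L̄ + μ̄)⟪d, u⟫`, and under this inequality
`‖u - ρ d‖ ≤ λ ‖u + ρ d‖`: the ratio is extremal when `d = μ̄u` or `d = L̄u`.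
-/

open Set Filter Topology
open scoped RealInnerProductSpace

variable {E : Type*} [NormedAddCommGroup E] [InnerProductSpace ℝ E]

lemma StrongConvexOn.add_le_of_isMinOn {s : Set E} {m : ℝ} {Φ : E → ℝ} {q y : E}
    (hΦ : StrongConvexOn s m Φ) (hq : IsMinOn Φ s q) (hqs : q ∈ s) (hys : y ∈ s) :
    Φ q + m / 2 * ‖y - q‖ ^ 2 ≤ Φ y := by
  have hlim : Tendsto (fun t : ℝ => Φ q + (1 - t) * (m / 2 * ‖y - q‖ ^ 2)) (𝓝[>] 0)
      (𝓝 (Φ q + m / 2 * ‖y - q‖ ^ 2)) :=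
    (Continuous.tendsto' (by fun_prop) 0 _ (by simp)).mono_left nhdsWithin_le_nhds
  refine le_of_tendsto hlim (eventually_of_mem (Ioo_mem_nhdsGT one_pos) fun t ⟨ht0, ht1⟩ => ?_)
  have hmin : Φ q ≤ Φ ((1 - t) • q + t • y) :=
    hq (hΦ.1 hqs hys (sub_nonneg.2 ht1.le) ht0.le (sub_add_cancel 1 t))
  have hconv := hΦ.2 hqs hys (sub_nonneg.2 ht1.le) ht0.le (sub_add_cancel 1 t)
  simp only [smul_eq_mul, norm_sub_rev q y] at hconv
  refine le_of_mul_le_mul_left ?_ ht0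
  nlinarith

lemma ConvexOn.strongConvexOn_add_norm_sub_sq {s : Set E} {h : E → ℝ} (hh : ConvexOn ℝ s h)
    (ρ : ℝ) (x : E) : StrongConvexOn s ρ⁻¹ fun y => h y + ‖y - x‖ ^ 2 / (2 * ρ) := by
  rw [strongConvexOn_iff_convex]
  refine ((hh.add ((-ρ⁻¹ • innerₛₗ ℝ x).convexOn hh.1)).add_const (‖x‖ ^ 2 / (2 * ρ))).congr
    fun y _ => ?_
  simp only [Pi.add_apply, LinearMap.smul_apply, innerₛₗ_apply_apply, smul_eq_mul,
    norm_sub_sq_real, real_inner_comm x y]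
  ring

lemma norm_sub_sq_le_inner_of_isMinOn_prox {h : E → ℝ} (hh : ConvexOn ℝ univ h) {ρ : ℝ}
    (hρ : 0 < ρ) {P : E → E}
    (hP : ∀ x, IsMinOn (fun y => h y + ‖y - x‖ ^ 2 / (2 * ρ)) univ (P x)) (z w : E) :
    ‖P z - P w‖ ^ 2 ≤ ⟪P z - P w, z - w⟫ := by
  have hz := (hh.strongConvexOn_add_norm_sub_sq ρ z).add_le_of_isMinOn (hP z) trivial
    (mem_univ (P w))
  have hw := (hh.strongConvexOn_add_norm_sub_sq ρ w).add_le_of_isMinOn (hP w) trivial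
    (mem_univ (P z))
  have hsum : ‖P z - z‖ ^ 2 + ‖P w - w‖ ^ 2 + 2 * ‖P z - P w‖ ^ 2 ≤
      ‖P w - z‖ ^ 2 + ‖P z - w‖ ^ 2 := by
    rw [norm_sub_rev (P w) (P z)] at hz
    have := add_le_add hz hw
    field_simp at this
    linarith
  simp only [norm_sub_sq_real, inner_sub_left, inner_sub_right, real_inner_comm] at hsum ⊢
  linarith

lemma norm_two_smul_sub_le_of_norm_sq_le_inner {u v : E} (h : ‖u‖ ^ 2 ≤ ⟪u, v⟫) :
    ‖(2 : ℝ) • u - v‖ ≤ ‖v‖ := by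
  refine (pow_le_pow_iff_left₀ (norm_nonneg _) (norm_nonneg _) two_ne_zero).1 ?_
  rw [norm_sub_sq_real, norm_smul, real_inner_smul_left]
  norm_num
  linarith

lemma norm_reflection_sub_le_of_convexOn {h : E → ℝ} (hh : ConvexOn ℝ univ h) {ρ : ℝ}
    (hρ : 0 < ρ) {P : E → E}
    (hP : ∀ x, IsMinOn (fun y => h y + ‖y - x‖ ^ 2 / (2 * ρ)) univ (P x)) (z w : E) :
    ‖(2 • P z - z) - (2 • P w - w)‖ ≤ ‖z - w‖ := by
  have : (2 • P z - z) - (2 • P w - w) = (2 : ℝ) • (P z - P w) - (z - w) := by module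
  rw [this]
  exact norm_two_smul_sub_le_of_norm_sq_le_inner (norm_sub_sq_le_inner_of_isMinOn_prox hh hρ hP z w)

section Gradient

variable [CompleteSpace E]

lemma HasGradientAt.hasDerivAt_comp_add_smul {F : E → ℝ} {g x v : E} {t : ℝ}
    (hF : HasGradientAt F g (x + t • v)) :
    HasDerivAt (fun s : ℝ => F (x + s • v)) ⟪g, v⟫ t := by
  have hline : HasDerivAt (fun s : ℝ => x + s • v) v t := by
    simpa using ((hasDerivAt_id t).smul_const v).const_add x
  exact hF.hasFDerivAt.comp_hasDerivAt t hline

lemma HasGradientAt.sub_mul_norm_sq {F : E → ℝ} {g x : E} (hF : HasGradientAt F g x) (c : ℝ) :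
    HasGradientAt (fun y => F y - c / 2 * ‖y‖ ^ 2) (g - c • x) x := by
  rw [hasGradientAt_iff_hasFDerivAt]
  refine (hF.hasFDerivAt.sub ((hasStrictFDerivAt_norm_sq x).hasFDerivAt.const_mul (c / 2)))
    |>.congr_fderiv ?_
  ext v
  simp only [sub_apply, InnerProductSpace.toDual_apply_apply, smul_apply, coe_innerSL_apply,
    nsmul_eq_mul, Nat.cast_ofNat, smul_eq_mul, map_sub, map_smul, sub_right_inj]
  ring

lemma ConvexOn.add_inner_le_of_hasGradientAt {F : E → ℝ} {g x : E} (hF : ConvexOn ℝ univ F)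
    (hg : HasGradientAt F g x) (y : E) : F x + ⟪g, y - x⟫ ≤ F y := by
  have hline : ConvexOn ℝ univ fun s : ℝ => F (x + s • (y - x)) := by
    refine (hF.comp_affineMap (AffineMap.lineMap x y)).congr fun s _ => ?_
    simp [AffineMap.lineMap_apply_module', add_comm]
  have hslope := hline.le_slope_of_hasDerivAt (mem_univ 0) (mem_univ 1) one_pos
    (HasGradientAt.hasDerivAt_comp_add_smul (by simpa using hg))
  simp only [slope_def_field, one_smul, add_sub_cancel, zero_smul, add_zero, sub_zero,
    div_one] at hslope
  linarith

lemma ConvexOn.inner_sub_nonneg_of_hasGradientAt {F : E → ℝ} {F' : E → E}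
    (hF : ConvexOn ℝ univ F) (hF' : ∀ x, HasGradientAt F (F' x) x) (x y : E) :
    0 ≤ ⟪F' x - F' y, x - y⟫ := by
  have hx := hF.add_inner_le_of_hasGradientAt (hF' x) y
  have hy := hF.add_inner_le_of_hasGradientAt (hF' y) x
  rw [← neg_sub x y, inner_neg_right] at hx
  rw [inner_sub_left]
  linarith

lemma le_add_inner_add_sq_of_inner_gradient_sub_le {F : E → ℝ} {F' : E → E} {K : ℝ}
    (hF' : ∀ x, HasGradientAt F (F' x) x)
    (hK : ∀ x y, ⟪F' x - F' y, x - y⟫ ≤ K * ‖x - y‖ ^ 2) (x y : E) :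
    F y ≤ F x + ⟪F' x, y - x⟫ + K / 2 * ‖y - x‖ ^ 2 := by
  set v := y - x
  set φ : ℝ → ℝ := fun t => F (x + t • v) - t * ⟪F' x, v⟫ - K / 2 * t ^ 2 * ‖v‖ ^ 2
  have hφ : ∀ t, HasDerivAt φ (⟪F' (x + t • v), v⟫ - ⟪F' x, v⟫ - K * t * ‖v‖ ^ 2) t := by
    intro t
    have h := (((hF' (x + t • v)).hasDerivAt_comp_add_smul).sub
      ((hasDerivAt_id t).mul_const ⟪F' x, v⟫)).sub
      (((hasDerivAt_pow 2 t).const_mul (K / 2)).mul_const (‖v‖ ^ 2))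
    exact h.congr_deriv (by simp only [one_mul, Nat.cast_ofNat]; ring)
  have hanti : AntitoneOn φ (Icc 0 1) := by
    refine antitoneOn_of_deriv_nonpos (convex_Icc 0 1) ?_ ?_ ?_
    · exact HasDerivAt.continuousOn fun t _ => hφ t
    · exact fun t _ => (hφ t).differentiableAt.differentiableWithinAt
    · intro t ht
      rw [interior_Icc] at ht
      rw [(hφ t).deriv]
      have h := hK (x + t • v) x
      rw [add_sub_cancel_left, real_inner_smul_right, norm_smul, Real.norm_of_nonneg ht.1.le,
        inner_sub_left] at h
      nlinarith [ht.1]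
  have h01 := hanti (left_mem_Icc.2 zero_le_one) (right_mem_Icc.2 zero_le_one) zero_le_one
  simp only [φ, v, one_smul, add_sub_cancel, one_mul, one_pow, mul_one, zero_smul, add_zero,
    zero_mul, sub_zero, ne_eq, OfNat.ofNat_ne_zero, not_false_eq_true, zero_pow, mul_zero,
    tsub_le_iff_right] at h01
  linarith

lemma ConvexOn.add_inner_add_norm_sq_le {F : E → ℝ} {F' : E → E} {K : ℝ}
    (hF : ConvexOn ℝ univ F) (hF' : ∀ x, HasGradientAt F (F' x) x) (hK : 0 < K)
    (hdesc : ∀ x y, F y ≤ F x + ⟪F' x, y - x⟫ + K / 2 * ‖y - x‖ ^ 2) (x y : E) :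
    F x + ⟪F' x, y - x⟫ + ‖F' y - F' x‖ ^ 2 / (2 * K) ≤ F y := by
  -- compare `F` at the gradient step `y - K⁻¹ (∇F y - ∇F x)` from both sides
  set e := F' y - F' x
  have hlow := hF.add_inner_le_of_hasGradientAt (hF' x) (y - K⁻¹ • e)
  have hup := hdesc y (y - K⁻¹ • e)
  rw [sub_right_comm, inner_sub_right, real_inner_smul_right] at hlow
  rw [sub_sub_cancel_left, inner_neg_right, real_inner_smul_right, norm_neg, norm_smul,
    Real.norm_of_nonneg (inv_nonneg.2 hK.le)] at hup
  have he : ⟪F' y, e⟫ - ⟪F' x, e⟫ = ‖e‖ ^ 2 := by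
    rw [← inner_sub_left, real_inner_self_eq_norm_sq]
  field_simp at hlow hup ⊢
  nlinarith

lemma ConvexOn.norm_sub_sq_le_mul_inner {F : E → ℝ} {F' : E → E} {K : ℝ}
    (hF : ConvexOn ℝ univ F) (hF' : ∀ x, HasGradientAt F (F' x) x) (hK : 0 < K)
    (hdesc : ∀ x y, F y ≤ F x + ⟪F' x, y - x⟫ + K / 2 * ‖y - x‖ ^ 2) (x y : E) :
    ‖F' x - F' y‖ ^ 2 ≤ K * ⟪F' x - F' y, x - y⟫ := by
  have hxy := hF.add_inner_add_norm_sq_le hF' hK hdesc x y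
  have hyx := hF.add_inner_add_norm_sq_le hF' hK hdesc y x
  rw [norm_sub_rev, ← neg_sub x y, inner_neg_right] at hxy
  rw [inner_sub_left]
  field_simp at hxy hyx
  linarith

lemma StrongConvexOn.norm_sub_sq_add_le_mul_inner {f : E → ℝ} {f' : E → E} {μ L : ℝ}
    (hf : StrongConvexOn univ μ f) (hf' : ∀ x, HasGradientAt f (f' x) x)
    (hlip : LipschitzWith L.toNNReal f') (hμ : 0 ≤ μ) (hμL : μ ≤ L) (x y : E) :
    ‖f' x - f' y‖ ^ 2 + μ * L * ‖x - y‖ ^ 2 ≤ (L + μ) * ⟪f' x - f' y, x - y⟫ := by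
  have hlip' : ∀ a b, ‖f' a - f' b‖ ≤ L * ‖a - b‖ := fun a b => by
    simpa [Real.coe_toNNReal _ (hμ.trans hμL)] using hlip.norm_sub_le a b
  have hg := fun z => (hf' z).sub_mul_norm_sq μ
  have hgc : ConvexOn ℝ univ fun z => f z - μ / 2 * ‖z‖ ^ 2 := strongConvexOn_iff_convex.1 hf
  have hG : ∀ a b, (f' a - μ • a) - (f' b - μ • b) = (f' a - f' b) - μ • (a - b) := fun a b => by
    module
  have hGinner : ∀ a b, ⟪(f' a - μ • a) - (f' b - μ • b), a - b⟫ =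
      ⟪f' a - f' b, a - b⟫ - μ * ‖a - b‖ ^ 2 := fun a b => by
    rw [hG, inner_sub_left, real_inner_smul_left, real_inner_self_eq_norm_sq]
  have hcs := real_inner_le_norm (f' x - f' y) (x - y)
  rcases hμL.eq_or_lt with rfl | hlt
  · have hmono := hgc.inner_sub_nonneg_of_hasGradientAt hg x y
    rw [hGinner] at hmono
    nlinarith [hlip' x y, norm_nonneg (f' x - f' y), norm_nonneg (x - y)]
  · have hdesc := le_add_inner_add_sq_of_inner_gradient_sub_le hg (K := L - μ) fun a b => by
      rw [hGinner]
      nlinarith [real_inner_le_norm (f' a - f' b) (a - b), hlip' a b, norm_nonneg (a - b)]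
    have hcoco := hgc.norm_sub_sq_le_mul_inner hg (sub_pos.2 hlt) hdesc x y
    rw [hGinner, hG, norm_sub_sq_real, real_inner_smul_right, norm_smul,
      Real.norm_of_nonneg hμ] at hcoco
    nlinarith

lemma IsMinOn.eq_add_smul_of_hasGradientAt {f : E → ℝ} {g q x : E} {ρ : ℝ}
    (hq : IsMinOn (fun y => f y + ‖y - x‖ ^ 2 / (2 * ρ)) univ q) (hf : HasGradientAt f g q)
    (hρ : ρ ≠ 0) : x = q + ρ • g := by
  have hd : HasFDerivAt (fun y => f y + ‖y - x‖ ^ 2 / (2 * ρ))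
      (InnerProductSpace.toDual ℝ E (g + ρ⁻¹ • (q - x))) q := by
    simp_rw [div_eq_mul_inv]
    refine (hf.hasFDerivAt.add (((hasFDerivAt_id q).sub_const x).norm_sq.mul_const _))
      |>.congr_fderiv ?_
    ext w
    simp only [id_eq, map_sub, ContinuousLinearMap.comp_id, add_apply, smul_apply, sub_apply,
      InnerProductSpace.toDual_apply_apply, coe_innerSL_apply, nsmul_eq_mul, Nat.cast_ofNat,
      smul_eq_mul, map_add, map_smul, add_right_inj]
    field_simp
  have hv : g + ρ⁻¹ • (q - x) = 0 := by
    simpa using (InnerProductSpace.toDual ℝ E).map_eq_zero_iff.1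
      ((hq.isLocalMin univ_mem).hasFDerivAt_eq_zero hd)
  linear_combination (norm := match_scalars <;> field_simp <;> ring) -ρ • hv

end Gradient

-- The Lipschitz constant of the reflected resolvent `(1 - ρm) / (1 + ρm) • id` of `m/2 ‖·‖²`.
noncomputable def reflectionFactor (ρ m : ℝ) : ℝ := |1 - ρ * m| / (1 + ρ * m)

lemma reflectionFactor_nonneg {ρ m : ℝ} (hρ : 0 ≤ ρ) (hm : 0 ≤ m) :
    0 ≤ reflectionFactor ρ m := by
  unfold reflectionFactor
  positivity

lemma reflectionFactor_lt_one {ρ m : ℝ} (hρ : 0 < ρ) (hm : 0 < m) : reflectionFactor ρ m < 1 := by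
  have hρm := mul_pos hρ hm
  rw [reflectionFactor, div_lt_one (by linarith), abs_lt]
  constructor <;> linarith

lemma sq_one_sub_le_of_reflectionFactor_le {ρ m c : ℝ} (hρ : 0 ≤ ρ) (hm : 0 ≤ m)
    (hc : reflectionFactor ρ m ≤ c) : (1 - ρ * m) ^ 2 ≤ c ^ 2 * (1 + ρ * m) ^ 2 := by
  rw [reflectionFactor, div_le_iff₀ (by positivity)] at hc
  rw [← sq_abs, ← mul_pow]
  exact pow_le_pow_left₀ (abs_nonneg _) hc 2

lemma sub_le_sq_mul_add_of_cocoercive {a b s μ L ρ c : ℝ} (hμL : μ ≤ L)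
    (hρ : 0 < ρ) (ha : 0 ≤ a) (hcs : s ^ 2 ≤ a * b) (hC : b + μ * L * a ≤ (L + μ) * s)
    (hcμ : (1 - ρ * μ) ^ 2 ≤ c ^ 2 * (1 + ρ * μ) ^ 2)
    (hcL : (1 - ρ * L) ^ 2 ≤ c ^ 2 * (1 + ρ * L) ^ 2) (hc : c ^ 2 ≤ 1) :
    a - 2 * ρ * s + ρ ^ 2 * b ≤ c ^ 2 * (a + 2 * ρ * s + ρ ^ 2 * b) := by
  have hprod : (s - μ * a) * (s - L * a) ≤ 0 := by nlinarith [mul_le_mul_of_nonneg_left hC ha]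
  have hμaL : μ * a ≤ L * a := mul_le_mul_of_nonneg_right hμL ha
  have hsμ : μ * a ≤ s := by nlinarith
  have hsL : s ≤ L * a := by nlinarith
  have hb : 0 ≤ (1 - c ^ 2) * (ρ ^ 2 * ((L + μ) * s - μ * L * a - b)) :=
    mul_nonneg (sub_nonneg.2 hc) (mul_nonneg (sq_nonneg ρ) (by linarith))
  -- the bound is affine in `s`, so it suffices to check it at `s = μa` or at `s = La`
  rcases le_or_gt 0 (2 * (1 + c ^ 2) + ρ * (L + μ) * (c ^ 2 - 1)) with hslope | hslope
  · have hμend : 0 ≤ ρ * (s - μ * a) * (2 * (1 + c ^ 2) + ρ * (L + μ) * (c ^ 2 - 1)) :=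
      mul_nonneg (mul_nonneg hρ.le (by linarith)) hslope
    nlinarith [mul_nonneg ha (sub_nonneg.2 hcμ)]
  · have hLend : 0 ≤ ρ * (L * a - s) * -(2 * (1 + c ^ 2) + ρ * (L + μ) * (c ^ 2 - 1)) :=
      mul_nonneg (mul_nonneg hρ.le (by linarith)) (by linarith)
    nlinarith [mul_nonneg ha (sub_nonneg.2 hcL)]

lemma norm_sub_smul_le_mul_norm_add_smul_of_cocoercive {u d : E} {μ L ρ : ℝ} (hμ : 0 < μ)
    (hμL : μ ≤ L) (hρ : 0 < ρ) (h : ‖d‖ ^ 2 + μ * L * ‖u‖ ^ 2 ≤ (L + μ) * ⟪d, u⟫) :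
    ‖u - ρ • d‖ ≤ max (reflectionFactor ρ L) (reflectionFactor ρ μ) * ‖u + ρ • d‖ := by
  set c := max (reflectionFactor ρ L) (reflectionFactor ρ μ)
  have hc0 : 0 ≤ c := le_max_of_le_right (reflectionFactor_nonneg hρ.le hμ.le)
  have hc1 : c < 1 :=
    max_lt (reflectionFactor_lt_one hρ (hμ.trans_le hμL)) (reflectionFactor_lt_one hρ hμ)
  have hcμ := sq_one_sub_le_of_reflectionFactor_le hρ.le hμ.le
    (le_max_right (reflectionFactor ρ L) _)
  have hcL := sq_one_sub_le_of_reflectionFactor_le hρ.le (hμ.le.trans hμL)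
    (le_max_left _ (reflectionFactor ρ μ))
  have hcs : ⟪u, d⟫ ^ 2 ≤ ‖u‖ ^ 2 * ‖d‖ ^ 2 := by
    rw [← mul_pow, ← sq_abs]
    exact pow_le_pow_left₀ (abs_nonneg _) (abs_real_inner_le_norm u d) 2
  rw [real_inner_comm] at h
  have key := sub_le_sq_mul_add_of_cocoercive hμL hρ (sq_nonneg ‖u‖) hcs h hcμ hcL
    (by nlinarith)
  refine (pow_le_pow_iff_left₀ (norm_nonneg _) (by positivity) two_ne_zero).1 ?_
  rw [mul_pow, norm_sub_sq_real, norm_add_sq_real, norm_smul, real_inner_smul_right,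
    Real.norm_of_nonneg hρ.le, mul_pow]
  linarith

lemma norm_reflection_sub_le_of_strongConvexOn [CompleteSpace E] {f : E → ℝ} {f' : E → E}
    {μ L ρ : ℝ} (hf : StrongConvexOn univ μ f) (hf' : ∀ x, HasGradientAt f (f' x) x)
    (hlip : LipschitzWith L.toNNReal f') (hμ : 0 < μ) (hμL : μ ≤ L) (hρ : 0 < ρ) {P : E → E}
    (hP : ∀ x, IsMinOn (fun y => f y + ‖y - x‖ ^ 2 / (2 * ρ)) univ (P x)) (z w : E) :
    ‖(2 • P z - z) - (2 • P w - w)‖ ≤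
      max (reflectionFactor ρ L) (reflectionFactor ρ μ) * ‖z - w‖ := by
  have hz := (hP z).eq_add_smul_of_hasGradientAt (hf' (P z)) hρ.ne'
  have hw := (hP w).eq_add_smul_of_hasGradientAt (hf' (P w)) hρ.ne'
  have hzw : z - w = (P z - P w) + ρ • (f' (P z) - f' (P w)) := by
    calc z - w = (P z + ρ • f' (P z)) - (P w + ρ • f' (P w)) := by rw [← hz, ← hw]
      _ = _ := by module
  have hrefl : (2 • P z - z) - (2 • P w - w) = (P z - P w) - ρ • (f' (P z) - f' (P w)) := by
    calc (2 • P z - z) - (2 • P w - w) = (2 : ℝ) • (P z - P w) - (z - w) := by module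
      _ = _ := by rw [hzw]; module
  rw [hrefl, hzw]
  refine norm_sub_smul_le_mul_norm_add_smul_of_cocoercive hμ hμL hρ ?_
  exact hf.norm_sub_sq_add_le_mul_inner hf' hlip hμ.le hμL (P z) (P w)

theorem peaceman_rachford_contraction_general {p : ℕ}
    (df dh : EuclideanSpace ℝ (Fin p) → ℝ)
    (μ L ρ : ℝ) (hμ : 0 < μ) (hμL : μ ≤ L) (hρ : 0 < ρ)
    (hsc : StrongConvexOn Set.univ μ df) (hsm : IsSmoothFn L df)
    (hconv : ConvexOn ℝ Set.univ dh)
    (Pf Ph : EuclideanSpace ℝ (Fin p) → EuclideanSpace ℝ (Fin p))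
    (hPf : IsProxOf ρ df Pf) (hPh : IsProxOf ρ dh Ph)
    -- the Peaceman–Rachford operator T = refl_{ρ d_h} ∘ refl_{ρ d_f}
    (T : EuclideanSpace ℝ (Fin p) → EuclideanSpace ℝ (Fin p))
    (hT : ∀ z, T z = 2 • Ph (2 • Pf z - z) - (2 • Pf z - z)) :
    LipschitzWith (max (|1 - ρ * L| / (1 + ρ * L)) (|1 - ρ * μ| / (1 + ρ * μ))).toNNReal T ∧
    max (|1 - ρ * L| / (1 + ρ * L)) (|1 - ρ * μ| / (1 + ρ * μ)) < 1 := by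
  obtain ⟨f', hf', hlip⟩ := hsm
  refine ⟨LipschitzWith.of_dist_le' fun z w => ?_,
    max_lt (reflectionFactor_lt_one hρ (hμ.trans_le hμL)) (reflectionFactor_lt_one hρ hμ)⟩
  rw [dist_eq_norm, dist_eq_norm, hT, hT]
  calc _ ≤ ‖(2 • Pf z - z) - (2 • Pf w - w)‖ := norm_reflection_sub_le_of_convexOn hconv hρ hPh _ _
    _ ≤ _ := norm_reflection_sub_le_of_strongConvexOn hsc hf' hlip hμ hμL hρ hPf z w

theorem peaceman_rachford_contraction {p : ℕ}
    (df dh : EuclideanSpace ℝ (Fin p) → ℝ)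
    (μ L ρ : ℝ) (hμ : 0 < μ) (hμL : μ ≤ L) (hρ : 0 < ρ)
    (hsc : StrongConvexOn Set.univ μ df) (hsm : IsSmoothFn L df)
    (hconv : ConvexOn ℝ Set.univ dh) (hlsc : LowerSemicontinuous dh)
    (Pf Ph : EuclideanSpace ℝ (Fin p) → EuclideanSpace ℝ (Fin p))
    (hPf : IsProxOf ρ df Pf) (hPh : IsProxOf ρ dh Ph)
    -- the Peaceman–Rachford operator T = refl_{ρ d_h} ∘ refl_{ρ d_f}
    (T : EuclideanSpace ℝ (Fin p) → EuclideanSpace ℝ (Fin p))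
    (hT : ∀ z, T z = 2 • Ph (2 • Pf z - z) - (2 • Pf z - z)) :
    LipschitzWith (max (|1 - ρ * L| / (1 + ρ * L)) (|1 - ρ * μ| / (1 + ρ * μ))).toNNReal T ∧
    max (|1 - ρ * L| / (1 + ρ * L)) (|1 - ρ * μ| / (1 + ρ * μ)) < 1 :=
  peaceman_rachford_contraction_general df dh μ L ρ hμ hμL hρ hsc hsm hconv Pf Ph hPf hPh T hT
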